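/- arXiv:1110.1974 — 3 statements merged into one kernel-verified Lean document; each statement's English description precedes it below -/
import Mathlib

section
/- Let M be a locally compact, connected metric space with a continuous flow θ, and K a compact, invariant, proper subset of M. Then at least one of the following holds: (I) K is an attractor; (II) K is a repeller; (III) K is isolated from minimal sets and stagnant; (IV) every neighbourhood U of K contains an entire orbit disjoint from K (i.e., there exists z with O(z) ⊆ U \ K). -/
open Set Filter Metric Topology TopologicalSpace

variable {M : Type*} [MetricSpace M]

/-- The full orbit of a point under a flow. -/
def orbit (ϕ : Flow ℝ M) (x : M) : Set M := Set.range fun t => ϕ t x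

/-- The positive (forward) half orbit. -/
def posOrbit (ϕ : Flow ℝ M) (x : M) : Set M := {y | ∃ t : ℝ, 0 ≤ t ∧ ϕ t x = y}

/-- The negative (backward) half orbit. -/
def negOrbit (ϕ : Flow ℝ M) (x : M) : Set M := {y | ∃ t : ℝ, t ≤ 0 ∧ ϕ t x = y}

/-- Positive orbital saturation of a set. -/
def posSat (ϕ : Flow ℝ M) (s : Set M) : Set M := ⋃ x ∈ s, posOrbit ϕ x

/-- The ω-limit set of a point. -/
def omegaSet (ϕ : Flow ℝ M) (x : M) : Set M :=
  ⋂ t : ℝ, closure {y | ∃ s : ℝ, t ≤ s ∧ ϕ s x = y}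

/-- The α-limit set of a point. -/
def alphaSet (ϕ : Flow ℝ M) (x : M) : Set M :=
  ⋂ t : ℝ, closure {y | ∃ s : ℝ, s ≤ t ∧ ϕ s x = y}

/-- A set is invariant under the flow. -/
def flowInv (ϕ : Flow ℝ M) (s : Set M) : Prop := ∀ t : ℝ, ϕ t '' s = s

/-- Stability of a set: every neighbourhood contains a positively invariant neighbourhood. -/
def Stable (ϕ : Flow ℝ M) (K : Set M) : Prop :=
  ∀ U ∈ 𝓝ˢ K, ∃ V ∈ 𝓝ˢ K, posSat ϕ V ⊆ U

/-- The set of points whose ω-limit set is nonempty and contained in `K`. -/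
def Bplus (ϕ : Flow ℝ M) (K : Set M) : Set M :=
  {x | (omegaSet ϕ x).Nonempty ∧ omegaSet ϕ x ⊆ K}

/-- `K` is an attractor: stable and `B⁺(K)` is a neighbourhood of `K`. -/
def IsAttractor (ϕ : Flow ℝ M) (K : Set M) : Prop :=
  Stable ϕ K ∧ Bplus ϕ K ∈ 𝓝ˢ K

/-- `K` is a repeller: an attractor for the time-reversed flow. -/
def IsRepeller (ϕ : Flow ℝ M) (K : Set M) : Prop :=
  IsAttractor ϕ.reverse K

/-- A minimal set of the flow. -/
def IsMinimalSet (ϕ : Flow ℝ M) (s : Set M) : Prop :=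
  s.Nonempty ∧ IsClosed s ∧ flowInv ϕ s ∧
    ∀ t, t ⊆ s → t.Nonempty → IsClosed t → flowInv ϕ t → t = s

/-- `K` is stagnant. -/
def Stagnant (ϕ : Flow ℝ M) (K : Set M) : Prop :=
  ∃ x ∉ K, ∃ y ∉ K, (alphaSet ϕ x).Nonempty ∧ alphaSet ϕ x ⊆ K ∧
    (omegaSet ϕ y).Nonempty ∧ omegaSet ϕ y ⊆ K

/-- `K` is isolated from minimal sets. -/
def IsolatedFromMinimals (ϕ : Flow ℝ M) (K : Set M) : Prop :=
  ∃ U ∈ 𝓝ˢ K, ∀ s, s ⊆ U \ K → ¬ IsMinimalSet ϕ s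

/-- `x` is a periodic point with minimal period `p`: the set of periods is `pℤ`. -/
def MinPeriod (ϕ : Flow ℝ M) (x : M) (p : ℝ) : Prop :=
  0 < p ∧ {t : ℝ | ϕ t x = x} = {t : ℝ | ∃ n : ℤ, t = n * p}

/-- `x` is an equilibrium. -/
def IsEquilibrium (ϕ : Flow ℝ M) (x : M) : Prop := ∀ t : ℝ, ϕ t x = x

/-!
Suppose (IV) fails: some neighbourhood `U` of `K` contains no entire orbit outside `K`; choose a
compact neighbourhood `N ⊆ U` of `K`. Then every invariant subset of `N` lies in `K`; this applies
to minimal sets and to the ω-limit set of any point whose forward semi-orbit stays in `N`.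

If no point outside `K` has its backward semi-orbit in `N`, then for every compact neighbourhood
`N' ⊆ N` of `K` the points whose forward semi-orbit stays in `N'` form a neighbourhood of `K`.
Otherwise points arbitrarily close to `K` leave `N'`. Their first exit points lie on the frontier
of `N'` and their backward semi-orbits stay in `N'` for longer and longer times, so by compactness
some point of the frontier has its whole backward semi-orbit in `N'`. This gives stability and
`B⁺(K) ∈ 𝓝ˢ K`, so `K` is an attractor. Symmetrically, `K` is a repeller if no point outside `K`
has its forward semi-orbit in `N`. If both kinds of points exist, their α- and ω-limit sets
make `K` stagnant.
-/

lemma orbit_reverse (ϕ : Flow ℝ M) (x : M) : orbit ϕ.reverse x = orbit ϕ x :=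
  neg_surjective.range_comp fun t => ϕ t x

lemma posOrbit_reverse (ϕ : Flow ℝ M) (x : M) : posOrbit ϕ.reverse x = negOrbit ϕ x := by
  ext y
  constructor
  · rintro ⟨t, ht, rfl⟩
    exact ⟨-t, neg_nonpos.2 ht, rfl⟩
  · rintro ⟨t, ht, rfl⟩
    exact ⟨-t, neg_nonneg.2 ht, by rw [Flow.reverse_apply, neg_neg]⟩

lemma negOrbit_reverse (ϕ : Flow ℝ M) (x : M) : negOrbit ϕ.reverse x = posOrbit ϕ x := by
  ext y
  constructor
  · rintro ⟨t, ht, rfl⟩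
    exact ⟨-t, neg_nonneg.2 ht, rfl⟩
  · rintro ⟨t, ht, rfl⟩
    exact ⟨-t, neg_nonpos.2 ht, by rw [Flow.reverse_apply, neg_neg]⟩

lemma alphaSet_eq_omegaSet_reverse (ϕ : Flow ℝ M) (x : M) :
    alphaSet ϕ x = omegaSet ϕ.reverse x := by
  rw [alphaSet, omegaSet, ← neg_surjective.iInter_comp]
  refine iInter_congr fun t => congrArg closure (ext fun y => ⟨?_, ?_⟩)
  · rintro ⟨s, hs, rfl⟩
    exact ⟨-s, by linarith, by rw [Flow.reverse_apply, neg_neg]⟩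
  · rintro ⟨s, hs, rfl⟩
    exact ⟨-s, by linarith, rfl⟩

lemma omegaSet_eq_omegaLimit (ϕ : Flow ℝ M) (x : M) : omegaSet ϕ x = omegaLimit atTop ϕ {x} := by
  rw [omegaLimit_def, atTop_basis.biInter_mem fun _ _ h => closure_mono (image2_subset_right h)]
  simp only [iInter_true, image2_singleton_right]
  rfl

lemma IsInvariant.subset_of_forall_not_orbit_subset {ϕ : Flow ℝ M} {K U S : Set M}
    (hS : IsInvariant ϕ S) (hSU : S ⊆ U) (hK : IsInvariant ϕ K)
    (hU : ∀ z, ¬ orbit ϕ z ⊆ U \ K) : S ⊆ K := by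
  intro z hz
  by_contra hzK
  refine hU z ?_
  rintro _ ⟨t, rfl⟩
  refine ⟨hSU (hS t hz), fun h => hzK ?_⟩
  simpa [← Flow.map_add] using hK (-t) h

lemma mem_Bplus_of_posOrbit_subset {ϕ : Flow ℝ M} {K U N : Set M} {x : M}
    (hK : IsInvariant ϕ K) (hU : ∀ z, ¬ orbit ϕ z ⊆ U \ K) (hN : IsCompact N) (hNU : N ⊆ U)
    (hx : posOrbit ϕ x ⊆ N) : x ∈ Bplus ϕ K := by
  have habsorb : closure (image2 ϕ (Ici 0) {x}) ⊆ N :=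
    closure_minimal (by rintro _ ⟨t, ht, _, rfl, rfl⟩; exact hx ⟨t, ht, rfl⟩) hN.isClosed
  change (omegaSet ϕ x).Nonempty ∧ omegaSet ϕ x ⊆ K
  rw [omegaSet_eq_omegaLimit]
  refine ⟨nonempty_omegaLimit_of_isCompact_absorbing _ _ _ hN ⟨_, Ici_mem_atTop 0, habsorb⟩
    (singleton_nonempty x), ?_⟩
  refine IsInvariant.subset_of_forall_not_orbit_subset ?_ ?_ hK hU
  · exact ϕ.isInvariant_omegaLimit _ _ fun t => tendsto_atTop_add_const_left _ t tendsto_id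
  · exact (omegaLimit_subset_closure_image2 _ _ _ (Ici_mem_atTop 0)).trans (habsorb.trans hNU)

lemma isolatedFromMinimals_of_forall_not_orbit_subset {ϕ : Flow ℝ M} {K U : Set M}
    (hK : IsInvariant ϕ K) (hUK : U ∈ 𝓝ˢ K) (hU : ∀ z, ¬ orbit ϕ z ⊆ U \ K) :
    IsolatedFromMinimals ϕ K := by
  refine ⟨U, hUK, fun s hs ⟨⟨z, hz⟩, _, hsinv, _⟩ => (hs hz).2 ?_⟩
  exact ((ϕ.isInvariant_iff_image_eq s).2 hsinv).subset_of_forall_not_orbit_subset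
    (hs.trans sdiff_subset) hK hU hz

lemma Flow.eventually_nhdsSet_forall_mem {X : Type*} [TopologicalSpace X] {ϕ : Flow ℝ X}
    {K W : Set X} {I : Set ℝ} (hI : IsCompact I) (hW : IsOpen W)
    (hKW : ∀ x ∈ K, ∀ t ∈ I, ϕ t x ∈ W) : ∀ᶠ x in 𝓝ˢ K, ∀ t ∈ I, ϕ t x ∈ W := by
  refine eventually_nhdsSet_iff_forall.2 fun x hx =>
    hI.eventually_forall_of_forall_eventually fun t ht => ?_
  exact (ϕ.continuous continuous_snd continuous_fst).continuousAt.preimage_mem_nhds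
    (hW.mem_nhds (hKW x hx t ht))

lemma exists_mem_frontier_first_exit {X : Type*} [TopologicalSpace X] {γ : ℝ → X}
    (hγ : Continuous γ) {N : Set X} (hN : IsClosed N) {T : ℝ} (hT : 0 ≤ T)
    (hin : ∀ t ∈ Icc 0 T, γ t ∈ interior N) (hout : ∃ t, 0 ≤ t ∧ γ t ∉ N) :
    ∃ τ, T ≤ τ ∧ γ τ ∈ frontier N ∧ ∀ t ∈ Icc 0 τ, γ t ∈ N := by
  set S := Ici 0 ∩ γ ⁻¹' (interior N)ᶜ
  have hS : IsClosed S := isClosed_Ici.inter (isOpen_interior.isClosed_compl.preimage hγ)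
  obtain ⟨t₀, ht₀, hγt₀⟩ := hout
  have hSbdd : BddBelow S := ⟨0, fun _ h => h.1⟩
  obtain ⟨hτ0, hτ⟩ : sInf S ∈ S :=
    hS.csInf_mem ⟨t₀, ht₀, fun h => hγt₀ (interior_subset h)⟩ hSbdd
  set τ := sInf S
  have hbefore : ∀ t ∈ Ico 0 τ, γ t ∈ interior N := fun t ht =>
    by_contra fun h => (csInf_le hSbdd ⟨ht.1, h⟩).not_gt ht.2
  have hTτ : T < τ := lt_of_not_ge fun h => hτ (hin τ ⟨hτ0, h⟩)
  have hτN : γ τ ∈ N :=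
    hN.mem_of_tendsto (hγ.continuousAt.tendsto.mono_left nhdsWithin_le_nhds)
      (eventually_of_mem (Ioo_mem_nhdsLT (hT.trans_lt hTτ)) fun t ht =>
        interior_subset (hbefore t (Ioo_subset_Ico_self ht)))
  refine ⟨τ, hTτ.le, hN.frontier_eq ▸ ⟨hτN, hτ⟩, fun t ht => ?_⟩
  rcases ht.2.lt_or_eq with h | rfl
  · exact interior_subset (hbefore t ⟨ht.1, h⟩)
  · exact hτN

lemma exists_mem_frontier_negOrbit_Icc_subset {ϕ : Flow ℝ M} {K N : Set M}
    (hK : IsForwardInvariant ϕ K) (hN : IsClosed N) (hKN : K ⊆ interior N)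
    (hV : {x | posOrbit ϕ x ⊆ N} ∉ 𝓝ˢ K) {T : ℝ} (hT : 0 ≤ T) :
    ∃ y ∈ frontier N, ∀ t ∈ Icc (-T) 0, ϕ t y ∈ N := by
  have htube : ∀ᶠ x in 𝓝ˢ K, ∀ t ∈ Icc 0 T, ϕ t x ∈ interior N :=
    ϕ.eventually_nhdsSet_forall_mem isCompact_Icc isOpen_interior fun x hx t ht =>
      hKN (hK ht.1 hx)
  obtain ⟨x, hxin, hxout⟩ := (htube.and_frequently (not_eventually.1 hV)).exists
  obtain ⟨_, ⟨t, ht, rfl⟩, hxt⟩ := not_subset.1 hxout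
  obtain ⟨τ, hTτ, hτ, hstay⟩ := exists_mem_frontier_first_exit
    (ϕ.continuous continuous_id continuous_const) hN hT hxin ⟨t, ht, hxt⟩
  refine ⟨ϕ τ x, hτ, fun s hs => ?_⟩
  rw [← ϕ.map_add]
  exact hstay _ ⟨by linarith [hs.1], by linarith [hs.2]⟩

lemma exists_negOrbit_subset_of_forall_Icc {ϕ : Flow ℝ M} {C N : Set M} (hC : IsCompact C)
    (hN : IsClosed N) (h : ∀ n : ℕ, ∃ y ∈ C, ∀ t ∈ Icc (-(n : ℝ)) 0, ϕ t y ∈ N) :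
    ∃ y ∈ C, negOrbit ϕ y ⊆ N := by
  set F : ℕ → Set M := fun n => C ∩ ⋂ t ∈ Icc (-(n : ℝ)) 0, ϕ t ⁻¹' N
  have hF : Antitone F := fun m n hmn =>
    inter_subset_inter_right _ <| biInter_subset_biInter_left <|
      Icc_subset_Icc_left <| neg_le_neg <| Nat.cast_le.2 hmn
  have hFc : ∀ n, IsClosed (F n) := fun n =>
    hC.isClosed.inter <| isClosed_biInter fun t _ => hN.preimage (ϕ.continuous_toFun t)
  obtain ⟨y, hy⟩ := IsCompact.nonempty_iInter_of_directed_nonempty_isCompact_isClosed F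
    hF.directed_ge (fun n => (h n).imp fun y hy => ⟨hy.1, mem_iInter₂.2 hy.2⟩)
    (fun n => hC.of_isClosed_subset (hFc n) inter_subset_left) hFc
  refine ⟨y, (mem_iInter.1 hy 0).1, ?_⟩
  rintro _ ⟨t, ht, rfl⟩
  obtain ⟨n, hn⟩ := exists_nat_ge (-t)
  exact mem_iInter₂.1 (mem_iInter.1 hy n).2 t ⟨by linarith, ht⟩

lemma setOf_posOrbit_subset_mem_nhdsSet {ϕ : Flow ℝ M} {K N : Set M}
    (hK : IsForwardInvariant ϕ K) (hN : IsCompact N) (hKN : K ⊆ interior N)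
    (h : ∀ y ∈ frontier N, ¬ negOrbit ϕ y ⊆ N) : {x | posOrbit ϕ x ⊆ N} ∈ 𝓝ˢ K := by
  by_contra hV
  obtain ⟨y, hy, hyN⟩ := exists_negOrbit_subset_of_forall_Icc
    (hN.of_isClosed_subset isClosed_frontier hN.isClosed.frontier_subset) hN.isClosed
    fun n => exists_mem_frontier_negOrbit_Icc_subset hK hN.isClosed hKN hV n.cast_nonneg
  exact h y hy hyN

lemma isAttractor_of_forall_negOrbit_subset [LocallyCompactSpace M] {ϕ : Flow ℝ M}
    {K U N : Set M} (hKc : IsCompact K) (hK : IsInvariant ϕ K) (hU : ∀ z, ¬ orbit ϕ z ⊆ U \ K)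
    (hN : IsCompact N) (hKN : K ⊆ interior N) (hNU : N ⊆ U)
    (h : ∀ x, negOrbit ϕ x ⊆ N → x ∈ K) : IsAttractor ϕ K := by
  have hnhds : ∀ N', IsCompact N' → K ⊆ interior N' → N' ⊆ N →
      {x | posOrbit ϕ x ⊆ N'} ∈ 𝓝ˢ K := fun N' hN' hKN' hN'N =>
    setOf_posOrbit_subset_mem_nhdsSet hK.isForwardInvariant hN' hKN' fun y hy hyN' =>
      disjoint_interior_frontier.notMem_of_mem_left (hKN' (h y (hyN'.trans hN'N))) hy
  refine ⟨fun V hV => ?_, mem_of_superset (hnhds N hN hKN subset_rfl) fun x hx =>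
    mem_Bplus_of_posOrbit_subset hK hU hN hNU hx⟩
  obtain ⟨N', hN', hKN', hN'V⟩ := exists_compact_between hKc (isOpen_interior.inter isOpen_interior)
    (subset_inter (subset_interior_iff_mem_nhdsSet.2 hV) hKN)
  refine ⟨_, hnhds N' hN' hKN' fun y hy => interior_subset (hN'V hy).2, iUnion₂_subset ?_⟩
  exact fun x hx => hx.trans fun y hy => interior_subset (hN'V hy).1

theorem ura_kimura_bhatia_general
    {M : Type*} [MetricSpace M] [LocallyCompactSpace M]
    (ϕ : Flow ℝ M) (K : Set M)
    (hKc : IsCompact K) (hKinv : flowInv ϕ K) :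
    IsAttractor ϕ K ∨ IsRepeller ϕ K ∨
      (IsolatedFromMinimals ϕ K ∧ Stagnant ϕ K) ∨
      ∀ U ∈ 𝓝ˢ K, ∃ z : M, orbit ϕ z ⊆ U \ K := by
  by_cases hIV : ∀ U ∈ 𝓝ˢ K, ∃ z : M, orbit ϕ z ⊆ U \ K
  · exact Or.inr <| Or.inr <| Or.inr hIV
  push Not at hIV
  obtain ⟨U, hUK, hU⟩ := hIV
  obtain ⟨N, hN, hKN, hNint⟩ :=
    exists_compact_between hKc isOpen_interior (subset_interior_iff_mem_nhdsSet.2 hUK)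
  have hNU : N ⊆ U := hNint.trans interior_subset
  have hK : IsInvariant ϕ K := (ϕ.isInvariant_iff_image_eq K).2 hKinv
  have hK' : IsInvariant ϕ.reverse K := fun t => hK (-t)
  have hU' : ∀ z, ¬ orbit ϕ.reverse z ⊆ U \ K := by simpa only [orbit_reverse] using hU
  by_cases hrep : ∀ y, posOrbit ϕ y ⊆ N → y ∈ K
  · refine Or.inr <| Or.inl <| isAttractor_of_forall_negOrbit_subset hKc hK' hU' hN hKN hNU ?_
    simpa only [negOrbit_reverse] using hrep
  by_cases hatt : ∀ x, negOrbit ϕ x ⊆ N → x ∈ K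
  · exact Or.inl <| isAttractor_of_forall_negOrbit_subset hKc hK hU hN hKN hNU hatt
  push Not at hrep hatt
  obtain ⟨y, hyN, hyK⟩ := hrep
  obtain ⟨x, hxN, hxK⟩ := hatt
  have hα : (alphaSet ϕ x).Nonempty ∧ alphaSet ϕ x ⊆ K := by
    rw [alphaSet_eq_omegaSet_reverse]
    exact mem_Bplus_of_posOrbit_subset hK' hU' hN hNU (posOrbit_reverse ϕ x ▸ hxN)
  have hω : y ∈ Bplus ϕ K := mem_Bplus_of_posOrbit_subset hK hU hN hNU hyN
  exact Or.inr <| Or.inr <| Or.inl ⟨isolatedFromMinimals_of_forall_not_orbit_subset hK hUK hU,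
    x, hxK, y, hyK, hα.1, hα.2, hω.1, hω.2⟩

theorem ura_kimura_bhatia
    {M : Type*} [MetricSpace M] [LocallyCompactSpace M] [ConnectedSpace M]
    (ϕ : Flow ℝ M) (K : Set M)
    (hKc : IsCompact K) (hKinv : flowInv ϕ K) (hproper : K ≠ Set.univ) :
    IsAttractor ϕ K ∨ IsRepeller ϕ K ∨
      (IsolatedFromMinimals ϕ K ∧ Stagnant ϕ K) ∨
      ∀ U ∈ 𝓝ˢ K, ∃ z : M, orbit ϕ z ⊆ U \ K :=
  ura_kimura_bhatia_general ϕ K hKc hKinv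
end

section
/- Let M be a locally compact metric space with a continuous flow and Q a compact aperiodic minimal set (a compact minimal set that is neither an equilibrium orbit nor a periodic orbit). Then for every m ≥ 1 there exists ε > 0 such that every periodic orbit γ with dist(γ, Q) < ε has minimal period greater than m. -/
open Set Filter Metric Topology TopologicalSpace

variable {M : Type*} [MetricSpace M]

/-- `Q` is a compact aperiodic minimal set: compact minimal, neither an equilibrium
orbit nor a periodic orbit. -/
def IsAperiodicMinimal (ϕ : Flow ℝ M) (Q : Set M) : Prop :=
  IsCompact Q ∧ IsMinimalSet ϕ Q ∧
    (¬ ∃ x : M, IsEquilibrium ϕ x ∧ Q = {x}) ∧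
    (¬ ∃ (x : M) (p : ℝ), MinPeriod ϕ x p ∧ Q = orbit ϕ x)

/-!
A point of `Q` with a nonzero period has a compact, hence closed, invariant orbit, which by
minimality is all of `Q`; the closed subgroup of its periods is then `ℝ` or cyclic, so `Q` would be
an equilibrium or a periodic orbit. Hence the compact set `[1, m + 1] × Q` misses the closed set
`{(T, x) | ϕ T x = x}` and lies at positive distance `ε` from it. A point with minimal period
`p ≤ m` has a period `T ∈ [1, 1 + p]` (a multiple of `p`), so `(T, y)` is in that closed set for
every `y` on its orbit, which therefore stays `ε` away from `Q`.
-/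

def periods (ϕ : Flow ℝ M) (x : M) : AddSubgroup ℝ :=
  letI := ϕ.toAddAction
  AddAction.stabilizer ℝ x

section

variable {ϕ : Flow ℝ M} {x : M} {p T : ℝ}

lemma mem_periods : T ∈ periods ϕ x ↔ ϕ T x = x := Iff.rfl

lemma isClosed_periods (ϕ : Flow ℝ M) (x : M) : IsClosed (periods ϕ x : Set ℝ) :=
  isClosed_eq (ϕ.continuous continuous_id continuous_const) continuous_const

lemma periods_apply (ϕ : Flow ℝ M) (s : ℝ) (x : M) : periods ϕ (ϕ s x) = periods ϕ x := by
  ext t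
  rw [mem_periods, mem_periods, ← ϕ.map_add, add_comm, ϕ.map_add]
  exact (ϕ.toHomeomorph s).injective.eq_iff

lemma minPeriod_iff : MinPeriod ϕ x p ↔ 0 < p ∧ periods ϕ x = AddSubgroup.zmultiples p := by
  simp [MinPeriod, SetLike.ext_iff, Set.ext_iff, mem_periods, AddSubgroup.mem_zmultiples_iff,
    zsmul_eq_mul, eq_comm]

lemma MinPeriod.of_mem_orbit {y : M} (h : MinPeriod ϕ x p) (hy : y ∈ orbit ϕ x) :
    MinPeriod ϕ y p := by
  obtain ⟨s, rfl⟩ := hy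
  rw [minPeriod_iff, periods_apply]
  exact minPeriod_iff.1 h

lemma MinPeriod.exists_period_mem_Icc (h : MinPeriod ϕ x p) : ∃ T ∈ Icc 1 (1 + p), ϕ T x = x := by
  obtain ⟨n, hn, -⟩ := existsUnique_add_zsmul_mem_Ioc h.1 0 1
  rw [zero_add] at hn
  refine ⟨n • p, Ioc_subset_Icc_self hn, mem_periods.1 ?_⟩
  rw [(minPeriod_iff.1 h).2]
  exact AddSubgroup.zsmul_mem_zmultiples p n

lemma isEquilibrium_or_exists_minPeriod (hT : T ≠ 0) (h : ϕ T x = x) :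
    IsEquilibrium ϕ x ∨ ∃ p, MinPeriod ϕ x p := by
  rcases (periods ϕ x).dense_or_cyclic with hd | ⟨a, ha⟩
  · have huniv : (periods ϕ x : Set ℝ) = univ := by
      rw [← (isClosed_periods ϕ x).closure_eq, hd.closure_eq]
    exact .inl fun t => mem_periods.1 (by rw [← SetLike.mem_coe, huniv]; trivial)
  · rw [← AddSubgroup.zmultiples_eq_closure, ← zmultiples_abs] at ha
    refine .inr ⟨|a|, minPeriod_iff.2 ⟨abs_pos.2 ?_, ha⟩⟩
    rintro rfl
    have hT0 : T ∈ AddSubgroup.zmultiples |(0 : ℝ)| := ha ▸ mem_periods.2 h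
    exact hT (by simpa using hT0)

lemma isCompact_orbit_of_apply_eq (hT : T ≠ 0) (h : ϕ T x = x) : IsCompact (orbit ϕ x) :=
  Function.Periodic.compact_of_continuous (fun t => by rw [ϕ.map_add, h]) hT
    (ϕ.continuous continuous_id continuous_const)

lemma flowInv_orbit (ϕ : Flow ℝ M) (x : M) : flowInv ϕ (orbit ϕ x) :=
  (ϕ.isInvariant_iff_image_eq _).1 (ϕ.isInvariant_orbit x)

lemma orbit_subset_of_flowInv {s : Set M} (hs : flowInv ϕ s) (hx : x ∈ s) : orbit ϕ x ⊆ s := by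
  rintro _ ⟨t, rfl⟩
  exact hs t ▸ mem_image_of_mem _ hx

lemma IsEquilibrium.orbit_eq (h : IsEquilibrium ϕ x) : orbit ϕ x = {x} := by
  rw [orbit, show (fun t => ϕ t x) = fun _ => x from funext h, range_const]

lemma IsMinimalSet.orbit_eq {Q : Set M} (hQ : IsMinimalSet ϕ Q) (hx : x ∈ Q)
    (hc : IsClosed (orbit ϕ x)) : orbit ϕ x = Q :=
  hQ.2.2.2 _ (orbit_subset_of_flowInv hQ.2.2.1 hx) ⟨x, 0, ϕ.map_zero_apply x⟩ hc
    (flowInv_orbit ϕ x)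

lemma IsAperiodicMinimal.apply_ne {Q : Set M} (hQ : IsAperiodicMinimal ϕ Q) (hx : x ∈ Q)
    (hT : T ≠ 0) : ϕ T x ≠ x := by
  intro h
  have hQx := hQ.2.1.orbit_eq hx (isCompact_orbit_of_apply_eq hT h).isClosed
  rcases isEquilibrium_or_exists_minPeriod hT h with he | ⟨p, hp⟩
  · exact hQ.2.2.1 ⟨x, he, hQx ▸ he.orbit_eq⟩
  · exact hQ.2.2.2 ⟨x, p, hp, hQx.symm⟩

end

theorem periods_blow_up_near_aperiodic_minimal_general
    {M : Type*} [MetricSpace M]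
    (ϕ : Flow ℝ M) (Q : Set M) (hQ : IsAperiodicMinimal ϕ Q) :
    ∀ m : ℕ, 1 ≤ m → ∃ ε > (0 : ℝ), ∀ (x : M) (p : ℝ), MinPeriod ϕ x p →
      (∃ y ∈ orbit ϕ x, Metric.infDist y Q < ε) → (m : ℝ) < p := by
  intro m _
  have hdisj : Icc (1 : ℝ) (m + 1) ×ˢ Q ⊆ {z : ℝ × M | ϕ z.1 z.2 = z.2}ᶜ := fun z hz =>
    hQ.apply_ne hz.2 (zero_lt_one.trans_le hz.1.1).ne'
  obtain ⟨ε, hε, hεQ⟩ := (isCompact_Icc.prod hQ.1).exists_thickening_subset_open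
    (isClosed_eq (ϕ.continuous continuous_fst continuous_snd) continuous_snd).isOpen_compl hdisj
  refine ⟨ε, hε, fun x p hp ⟨y, hy, hyQ⟩ => ?_⟩
  by_contra! hpm
  obtain ⟨T, hT, hTy⟩ := (hp.of_mem_orbit hy).exists_period_mem_Icc
  obtain ⟨z, hz, hyz⟩ := (infDist_lt_iff hQ.2.1.1).1 hyQ
  have hnear : (T, y) ∈ thickening ε (Icc (1 : ℝ) (m + 1) ×ˢ Q) :=
    mem_thickening_iff.2
      ⟨(T, z), ⟨⟨hT.1, by linarith [hT.2]⟩, hz⟩, by simpa [Prod.dist_eq] using hyz⟩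
  exact hεQ hnear hTy

theorem periods_blow_up_near_aperiodic_minimal
    {M : Type*} [MetricSpace M] [LocallyCompactSpace M]
    (ϕ : Flow ℝ M) (Q : Set M) (hQ : IsAperiodicMinimal ϕ Q) :
    ∀ m : ℕ, 1 ≤ m → ∃ ε > (0 : ℝ), ∀ (x : M) (p : ℝ), MinPeriod ϕ x p →
      (∃ y ∈ orbit ϕ x, Metric.infDist y Q < ε) → (m : ℝ) < p :=
  periods_blow_up_near_aperiodic_minimal_general ϕ Q hQ
end

section
/- Let M be a locally compact metric space with a continuous flow, and let 𝔐 be a set of compact minimal sets of the flow such that for every X ∈ 𝔐 and ε > 0, there exists Y ∈ 𝔐 with Y ≠ X and Y ⊆ B(X, ε). Then 𝔐 is dense in itself with respect to the Hausdorff metric, i.e., every X ∈ 𝔐 is a d_H-limit of elements of 𝔐 \ {X}. -/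
open Set Filter Metric Topology TopologicalSpace

variable {M : Type*} [MetricSpace M]

/-!
Every orbit of a compact minimal set `X` is dense in `X`, so by compactness finitely many times
`t` already carry any point of `X` within `ε / 2` of any other. The flow at these finitely many
times is uniformly continuous near `X`, so once an invariant set `Y` has a single point `δ`-close
to `X`, its images under these times come `ε`-close to every point of `X`. Hence an invariant `Y`
inside a small enough neighbourhood of `X` is Hausdorff-close to `X`.
-/

theorem flowInv.mapsTo {ϕ : Flow ℝ M} {s : Set M} (hs : flowInv ϕ s) (t : ℝ) :
    MapsTo (ϕ t) s s :=
  ((ϕ.isInvariant_iff_image_eq s).2 hs) t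

theorem IsMinimalSet.closure_orbit_eq {ϕ : Flow ℝ M} {X : Set M} (hX : IsMinimalSet ϕ X)
    {x : M} (hx : x ∈ X) : closure (orbit ϕ x) = X := by
  obtain ⟨-, hXclosed, hXinv, hXmin⟩ := hX
  have horbit : orbit ϕ x ⊆ X := by
    rintro _ ⟨t, rfl⟩
    exact hXinv.mapsTo t hx
  refine hXmin _ (closure_minimal horbit hXclosed) ⟨x, subset_closure ⟨0, ϕ.map_zero_apply x⟩⟩
    isClosed_closure ((ϕ.isInvariant_iff_image_eq _).1 fun t => ?_)
  exact (ϕ.isInvariant_orbit x t).closure (ϕ.continuous_toFun t)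

theorem IsMinimalSet.exists_finset_forall_exists_dist_lt {ϕ : Flow ℝ M} {X : Set M}
    (hXc : IsCompact X) (hX : IsMinimalSet ϕ X) {ε : ℝ} (hε : 0 < ε) :
    ∃ s : Finset ℝ, ∀ x ∈ X, ∀ z ∈ X, ∃ t ∈ s, dist (ϕ t x) z < ε := by
  let V : ℝ → Set (M × M) := fun t => {p | dist (ϕ t p.1) p.2 < ε}
  have hVopen (t : ℝ) : IsOpen (V t) :=
    isOpen_lt (((ϕ.continuous_toFun t).comp continuous_fst).dist continuous_snd)
      continuous_const
  have hcover : X ×ˢ X ⊆ ⋃ t, V t := by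
    rintro ⟨x, z⟩ ⟨hx, hz⟩
    rw [← hX.closure_orbit_eq hx, Metric.mem_closure_iff] at hz
    obtain ⟨_, ⟨t, rfl⟩, hdist⟩ := hz ε hε
    exact mem_iUnion.2 ⟨t, by simpa [V, dist_comm] using hdist⟩
  obtain ⟨s, hs⟩ := (hXc.prod hXc).elim_finite_subcover V hVopen hcover
  refine ⟨s, fun x hx z hz => ?_⟩
  simpa [V] using hs (mk_mem_prod hx hz)

theorem Flow.exists_pos_forall_dist_lt_of_isCompact (ϕ : Flow ℝ M) {K : Set M} {T : Set ℝ}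
    (hK : IsCompact K) (hT : IsCompact T) {ε : ℝ} (hε : 0 < ε) :
    ∃ δ > 0, ∀ x ∈ K, ∀ y, dist x y < δ → ∀ t ∈ T, dist (ϕ t x) (ϕ t y) < ε := by
  have hunif := (hT.prod hK).uniformContinuousAt_of_continuousAt (fun p : ℝ × M => ϕ p.1 p.2)
    (fun p _ => ϕ.cont'.continuousAt) (Metric.dist_mem_uniformity hε)
  obtain ⟨δ, hδ, hball⟩ := Metric.mem_uniformity_dist.1 hunif
  refine ⟨δ, hδ, fun x hx y hxy t ht => hball (a := (t, x)) (b := (t, y)) ?_ ⟨ht, hx⟩⟩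
  simpa [Prod.dist_eq] using hxy

theorem IsMinimalSet.exists_pos_subset_thickening {ϕ : Flow ℝ M} {X : Set M}
    (hXc : IsCompact X) (hX : IsMinimalSet ϕ X) {ε : ℝ} (hε : 0 < ε) :
    ∃ δ > 0, ∀ Y, flowInv ϕ Y → (Y ∩ thickening δ X).Nonempty → X ⊆ thickening ε Y := by
  obtain ⟨s, hs⟩ := hX.exists_finset_forall_exists_dist_lt hXc (half_pos hε)
  obtain ⟨δ, hδ, hclose⟩ :=
    ϕ.exists_pos_forall_dist_lt_of_isCompact hXc s.finite_toSet.isCompact (half_pos hε)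
  refine ⟨δ, hδ, fun Y hY ⟨y, hyY, hyX⟩ z hz => ?_⟩
  obtain ⟨x, hx, hxy⟩ := mem_thickening_iff.1 hyX
  obtain ⟨t, ht, htz⟩ := hs x hx z hz
  refine mem_thickening_iff.2 ⟨ϕ t y, hY.mapsTo t hyY, ?_⟩
  calc dist z (ϕ t y) ≤ dist (ϕ t x) z + dist (ϕ t x) (ϕ t y) := dist_triangle_left _ _ _
    _ < ε / 2 + ε / 2 := add_lt_add htz (hclose x hx y (by rwa [dist_comm]) t ht)
    _ = ε := add_halves ε

theorem Metric.hausdorffDist_le_of_subset_thickening {s t : Set M} {r : ℝ} (hr : 0 ≤ r)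
    (hst : s ⊆ thickening r t) (hts : t ⊆ thickening r s) : hausdorffDist s t ≤ r := by
  refine hausdorffDist_le_of_mem_dist hr (fun x hx => ?_) (fun x hx => ?_)
  · obtain ⟨y, hy, hxy⟩ := mem_thickening_iff.1 (hst hx)
    exact ⟨y, hy, hxy.le⟩
  · obtain ⟨y, hy, hxy⟩ := mem_thickening_iff.1 (hts hx)
    exact ⟨y, hy, hxy.le⟩

theorem metric_dense_implies_hausdorff_dense_general
    {M : Type*} [MetricSpace M]
    (ϕ : Flow ℝ M) (𝔐 : Set (Set M))
    (hmin : ∀ X ∈ 𝔐, IsCompact X ∧ IsMinimalSet ϕ X)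
    (hd : ∀ X ∈ 𝔐, ∀ ε > (0 : ℝ), ∃ Y ∈ 𝔐, Y ≠ X ∧ Y ⊆ Metric.thickening ε X) :
    ∀ X ∈ 𝔐, ∀ ε > (0 : ℝ), ∃ Y ∈ 𝔐, Y ≠ X ∧ Metric.hausdorffDist Y X < ε := by
  intro X hX ε hε
  obtain ⟨hXc, hXmin⟩ := hmin X hX
  obtain ⟨δ, hδ, hnear⟩ := hXmin.exists_pos_subset_thickening hXc (half_pos hε)
  obtain ⟨Y, hY, hYX, hYsub⟩ := hd X hX (min δ (ε / 2)) (lt_min hδ (half_pos hε))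
  obtain ⟨⟨y, hy⟩, -, hYinv, -⟩ := (hmin Y hY).2
  refine ⟨Y, hY, hYX, lt_of_le_of_lt ?_ (half_lt_self hε)⟩
  refine hausdorffDist_le_of_subset_thickening (half_pos hε).le
    (hYsub.trans (thickening_mono (min_le_right _ _) X)) ?_
  exact hnear Y hYinv ⟨y, hy, thickening_mono (min_le_left _ _) X (hYsub hy)⟩

theorem metric_dense_implies_hausdorff_dense
    {M : Type*} [MetricSpace M] [LocallyCompactSpace M]
    (ϕ : Flow ℝ M) (𝔐 : Set (Set M))
    (hmin : ∀ X ∈ 𝔐, IsCompact X ∧ IsMinimalSet ϕ X)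
    (hd : ∀ X ∈ 𝔐, ∀ ε > (0 : ℝ), ∃ Y ∈ 𝔐, Y ≠ X ∧ Y ⊆ Metric.thickening ε X) :
    ∀ X ∈ 𝔐, ∀ ε > (0 : ℝ), ∃ Y ∈ 𝔐, Y ≠ X ∧ Metric.hausdorffDist Y X < ε :=
  metric_dense_implies_hausdorff_dense_general ϕ 𝔐 hmin hd
end
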